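/- Suppose y : ℕ → (Fin T → ℝ^p) is a sequence of T-step trajectories (y(t) has components y(t)(k)) such that lim_{t→∞} ‖y(t+1)(k) - y(t)(k+1 mod T)‖ = 0 for all k ∈ Fin T. Then for each k, lim_{t→∞} ‖y(t+T)(k) - y(t)(k)‖ = 0, i.e., the trajectory sequence is asymptotically T-periodic in t. -/

import Mathlib

open Filter Topology

theorem tendsto_sub_iterate_of_tendsto_sub_succ {ι E : Type*} [AddGroup E] [TopologicalSpace E]
    [ContinuousAdd E] {x : ℕ → ι → E} {σ : ι → ι}
    (h : ∀ i, Tendsto (fun t => x (t + 1) i - x t (σ i)) atTop (𝓝 0)) (n : ℕ) (i : ι) :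
    Tendsto (fun t => x (t + n) i - x t (σ^[n] i)) atTop (𝓝 0) := by
  induction n generalizing i with
  | zero => simpa using tendsto_const_nhds
  | succ n ih =>
    -- one step from time `t + n`, then `n` steps from time `t` started at index `σ i`
    have hsum := ((h i).comp (tendsto_add_atTop_nat n)).add (ih (σ i))
    rw [add_zero] at hsum
    refine hsum.congr fun t => ?_
    rw [Function.comp_apply, sub_add_sub_cancel, add_right_comm, add_assoc, add_comm 1 n,
      Function.iterate_succ_apply]

open Fin.NatCast in
theorem Fin.iterate_add_one_self (T : ℕ) [NeZero T] (k : Fin T) : (· + 1)^[T] k = k := by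
  simp [add_right_iterate]

theorem asymptotically_periodic (p T : ℕ) [NeZero T]
    (y : ℕ → Fin T → EuclideanSpace ℝ (Fin p))
    (h : ∀ k : Fin T,
      Filter.Tendsto (fun t => ‖y (t + 1) k - y t (k + 1)‖) Filter.atTop (nhds 0)) :
    ∀ k : Fin T,
      Filter.Tendsto (fun t => ‖y (t + T) k - y t k‖) Filter.atTop (nhds 0) := by
  intro k
  have hshift := tendsto_sub_iterate_of_tendsto_sub_succ
    (fun k => tendsto_zero_iff_norm_tendsto_zero.2 (h k)) T k
  rw [Fin.iterate_add_one_self] at hshift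
  exact tendsto_zero_iff_norm_tendsto_zero.1 hshift
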